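/- arXiv:1309.3692 — 4 statements merged into one kernel-verified Lean document; each statement's English description precedes it below -/
import Mathlib

section
/- The expected one-step reward is monotone in each belief: for any finite set S of channels, any index i ∈ S, any access cap m ∈ ℕ, any ω_{-i} : S∖{i} → [0,1], and any x, y ∈ [0,1] with x ≥ y, it holds that R_m((x, ω_{-i}); S) ≥ R_m((y, ω_{-i}); S), where (x, ω_{-i}) denotes the belief vector on S assigning x to channel i and ω_{-i} elsewhere. -/
open Finset

noncomputable section

/-- Belief update map `τ(ω) = ω·p11 + (1-ω)·p01`. -/
def tau (p01 p11 ω : ℝ) : ℝ := ω * p11 + (1 - ω) * p01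

/-- Expected one-step reward `R_m(ω; S)` with access cap `m`:
the expectation of `min(#available, m)` when each channel `i ∈ S` is
independently available with probability `ω i`. -/
def expReward {ι : Type*} [DecidableEq ι] (m : ℕ) (S : Finset ι) (ω : ι → ℝ) : ℝ :=
  ∑ A ∈ S.powerset,
    (∏ i ∈ A, ω i) * (∏ i ∈ S \ A, (1 - ω i)) * ((min A.card m : ℕ) : ℝ)

/-- The set of reward increments `R_m(1,x) − R_m(0,x)` over `x ∈ [lo,hi]^{k'}`
(on `k' + 1` channels). -/
def RdiffSet (lo hi : ℝ) (m k' : ℕ) : Set ℝ :=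
  { r : ℝ | ∃ x : Fin k' → ℝ, (∀ i, x i ∈ Set.Icc lo hi) ∧
      r = expReward m Finset.univ (Fin.cons 1 x) -
          expReward m Finset.univ (Fin.cons 0 x) }

/-- `ℛ̄`: maximal reward increment. -/
def Rbar (lo hi : ℝ) (m k' : ℕ) : ℝ := sSup (RdiffSet lo hi m k')

/-- `ℛ̲`: minimal reward increment. -/
def Rlow (lo hi : ℝ) (m k' : ℕ) : ℝ := sInf (RdiffSet lo hi m k')

/-- The first `k` channels out of `N` (the myopically sensed channels for a
descending-ordered belief vector). -/
def senseSet (N k : ℕ) : Finset (Fin N) := Finset.univ.filter (fun i => (i : ℕ) < k)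

/-- Positively correlated case successor belief vector: `c` copies of `p11`,
then `τ(ω_{k+1}), …, τ(ω_N)`, then `k - c` copies of `p01`. -/
def nextPos (p01 p11 : ℝ) {N : ℕ} (k : ℕ) (ω : Fin N → ℝ) (c : ℕ) : Fin N → ℝ :=
  fun i =>
    if h1 : (i : ℕ) < c then p11
    else if h2 : (i : ℕ) < c + (N - k) then
      tau p01 p11 (ω ⟨k + ((i : ℕ) - c), by have := i.isLt; omega⟩)
    else p01

/-- Negatively correlated case successor belief vector: `k - c` copies of `p01`,
then `τ(ω_N), τ(ω_{N-1}), …, τ(ω_{k+1})` (reversed), then `c` copies of `p11`. -/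
def nextNeg (p01 p11 : ℝ) {N : ℕ} (k : ℕ) (ω : Fin N → ℝ) (c : ℕ) : Fin N → ℝ :=
  fun i =>
    if h1 : (i : ℕ) < k - c then p01
    else if h2 : (i : ℕ) < (k - c) + (N - k) then
      tau p01 p11 (ω ⟨N - 1 - ((i : ℕ) - (k - c)), by have := i.isLt; omega⟩)
    else p11

/-- Myopic value functions for the positively correlated case, indexed by the
number `s` of remaining steps (so `W_t = Wpos (T - t)`). -/
def Wpos (p01 p11 β : ℝ) (N k m : ℕ) : ℕ → (Fin N → ℝ) → ℝ
  | 0, ω => expReward m (senseSet N k) ω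
  | s + 1, ω =>
    expReward m (senseSet N k) ω +
      β * ∑ A ∈ (senseSet N k).powerset,
        (∏ i ∈ A, ω i) * (∏ i ∈ senseSet N k \ A, (1 - ω i)) *
          Wpos p01 p11 β N k m s (nextPos p01 p11 k ω A.card)

/-- Myopic value functions for the negatively correlated case, indexed by the
number `s` of remaining steps (so `W_t = Wneg (T - t)`). -/
def Wneg (p01 p11 β : ℝ) (N k m : ℕ) : ℕ → (Fin N → ℝ) → ℝ
  | 0, ω => expReward m (senseSet N k) ω
  | s + 1, ω =>
    expReward m (senseSet N k) ω +
      β * ∑ A ∈ (senseSet N k).powerset,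
        (∏ i ∈ A, ω i) * (∏ i ∈ senseSet N k \ A, (1 - ω i)) *
          Wneg p01 p11 β N k m s (nextNeg p01 p11 k ω A.card)

/-- Optimal value functions, indexed by the number `s` of remaining steps
(so `V_t = Vopt (T - t)`). -/
def Vopt (p01 p11 β : ℝ) (N k m : ℕ) : ℕ → (Fin N → ℝ) → ℝ
  | 0, ω => sSup { r : ℝ | ∃ π : Finset (Fin N), π.card = k ∧ r = expReward m π ω }
  | s + 1, ω =>
    sSup { r : ℝ | ∃ π : Finset (Fin N), π.card = k ∧
      r = expReward m π ω +
        β * ∑ B ∈ π.powerset,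
          (∏ i ∈ B, ω i) * (∏ i ∈ π \ B, (1 - ω i)) *
            Vopt p01 p11 β N k m s
              (fun j => if j ∈ B then p11 else if j ∈ π then p01 else tau p01 p11 (ω j)) }

/-- The cyclic right shift `(ω_N, ω_1, …, ω_{N-1})`. -/
def cycR {N : ℕ} (ω : Fin N → ℝ) : Fin N → ℝ :=
  fun i =>
    if h : (i : ℕ) = 0 then ω ⟨N - 1, by have := i.isLt; omega⟩
    else ω ⟨(i : ℕ) - 1, by have := i.isLt; omega⟩

/-- The cyclic left shift `(ω_2, ω_3, …, ω_N, ω_1)`. -/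
def cycL {N : ℕ} (ω : Fin N → ℝ) : Fin N → ℝ :=
  fun i =>
    if h : (i : ℕ) + 1 < N then ω ⟨(i : ℕ) + 1, h⟩
    else ω ⟨0, by have := i.isLt; omega⟩

/-- The vector `(ω_1, …, ω_{j-1}, x, y, ω_{j+2}, …, ω_N)` (0-indexed: `x` at
position `j`, `y` at position `j+1`). -/
def swapAt {N : ℕ} (ω : Fin N → ℝ) (j : ℕ) (x y : ℝ) : Fin N → ℝ :=
  fun i => if (i : ℕ) = j then x else if (i : ℕ) = j + 1 then y else ω i

end

/-! Conditioning on channel `i` writes `R_m(ω; S)` as `(1 - ω_i) E₀ + ω_i E₁`, where `E₀` and `E₁`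
are the expectations of `min(N, m)` and `min(N + 1, m)` for the number `N` of available channels
in `S ∖ {i}`. Neither depends on `ω_i`, and `E₀ ≤ E₁` because `min(·, m)` is monotone and the
weights are probabilities, so the reward is affine and nondecreasing in `ω_i`. -/

section expectCard

variable {ι : Type*} [DecidableEq ι]

/-- The expectation of `g N`, where `N` is the number of available channels in `s` and each
channel `j` is independently available with probability `ω j`. -/
def expectCard (g : ℕ → ℝ) (s : Finset ι) (ω : ι → ℝ) : ℝ :=
  ∑ A ∈ s.powerset, (∏ j ∈ A, ω j) * (∏ j ∈ s \ A, (1 - ω j)) * g A.card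

theorem expReward_eq_expectCard (m : ℕ) (s : Finset ι) (ω : ι → ℝ) :
    expReward m s ω = expectCard (fun n => ((min n m : ℕ) : ℝ)) s ω :=
  rfl

theorem expectCard_congr (g : ℕ → ℝ) (s : Finset ι) {ω ω' : ι → ℝ}
    (h : ∀ j ∈ s, ω j = ω' j) : expectCard g s ω = expectCard g s ω' := by
  refine sum_congr rfl fun A hA => ?_
  have hAs := mem_powerset.1 hA
  rw [prod_congr rfl fun j hj => h j (hAs hj),
    prod_congr rfl fun j hj => congrArg (1 - ·) (h j (mem_sdiff.1 hj).1)]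

theorem expectCard_insert (g : ℕ → ℝ) {s : Finset ι} {i : ι} (hi : i ∉ s) (ω : ι → ℝ) :
    expectCard g (insert i s) ω =
      (1 - ω i) * expectCard g s ω + ω i * expectCard (fun n => g (n + 1)) s ω := by
  rw [expectCard, sum_powerset_insert hi, expectCard, expectCard, mul_sum, mul_sum]
  congr 1 <;> refine sum_congr rfl fun A hA => ?_
  · have hiA : i ∉ A := fun h => hi (mem_powerset.1 hA h)
    rw [insert_sdiff_of_notMem s hiA, prod_insert (by simp [hi])]
    ring
  · have hiA : i ∉ A := fun h => hi (mem_powerset.1 hA h)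
    rw [insert_sdiff_insert, sdiff_insert_of_notMem hi, prod_insert hiA,
      card_insert_of_notMem hiA]
    ring

theorem expectCard_update (g : ℕ → ℝ) {s : Finset ι} {i : ι} (hi : i ∈ s) (ω : ι → ℝ)
    (x : ℝ) :
    expectCard g s (Function.update ω i x) =
      (1 - x) * expectCard g (s.erase i) ω +
        x * expectCard (fun n => g (n + 1)) (s.erase i) ω := by
  have hupdate : ∀ j ∈ s.erase i, Function.update ω i x j = ω j :=
    fun j hj => Function.update_of_ne (ne_of_mem_erase hj) x ω
  rw [← insert_erase hi, expectCard_insert g (notMem_erase i s), Function.update_self,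
    erase_insert (notMem_erase i s), expectCard_congr g _ hupdate,
    expectCard_congr (fun n => g (n + 1)) _ hupdate]

theorem expectCard_mono {g h : ℕ → ℝ} (hgh : ∀ n, g n ≤ h n) {s : Finset ι} {ω : ι → ℝ}
    (hω : ∀ j ∈ s, ω j ∈ Set.Icc (0 : ℝ) 1) : expectCard g s ω ≤ expectCard h s ω := by
  refine sum_le_sum fun A hA => mul_le_mul_of_nonneg_left (hgh _) ?_
  have hAs := mem_powerset.1 hA
  exact mul_nonneg (prod_nonneg fun j hj => (hω j (hAs hj)).1)
    (prod_nonneg fun j hj => sub_nonneg.2 (hω j (mem_sdiff.1 hj).1).2)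

end expectCard

theorem expReward_monotone_general {ι : Type*} [DecidableEq ι] (S : Finset ι) (i : ι)
    (hi : i ∈ S) (m : ℕ) (ω : ι → ℝ) (hω : ∀ j ∈ S.erase i, ω j ∈ Set.Icc (0 : ℝ) 1)
    (x y : ℝ) (hxy : x ≥ y) :
    expReward m S (Function.update ω i x) ≥ expReward m S (Function.update ω i y) := by
  have hcap : expectCard (fun n => ((min n m : ℕ) : ℝ)) (S.erase i) ω ≤
      expectCard (fun n => ((min (n + 1) m : ℕ) : ℝ)) (S.erase i) ω :=
    expectCard_mono (fun n => Nat.cast_le.2 (min_le_min_right m n.le_succ)) hω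
  rw [ge_iff_le, expReward_eq_expectCard, expReward_eq_expectCard, expectCard_update _ hi,
    expectCard_update _ hi]
  nlinarith [mul_nonneg (sub_nonneg.2 hxy) (sub_nonneg.2 hcap)]

/-- the expected one-step reward is monotone in each belief
coordinate. -/
theorem expReward_monotone {ι : Type*} [DecidableEq ι] (S : Finset ι) (i : ι)
    (hi : i ∈ S) (m : ℕ) (ω : ι → ℝ) (hω : ∀ j ∈ S.erase i, ω j ∈ Set.Icc (0 : ℝ) 1)
    (x y : ℝ) (hx : x ∈ Set.Icc (0 : ℝ) 1) (hy : y ∈ Set.Icc (0 : ℝ) 1) (hxy : x ≥ y) :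
    expReward m S (Function.update ω i x) ≥ expReward m S (Function.update ω i y) :=
  expReward_monotone_general S i hi m ω hω x y hxy
end

section
/- For the model with k sensed channels and access cap m = 1, assuming p01, p11 ∈ [0,1] with p11 ≥ p01, the extremal reward increments are ℛ̄ = (1 − p01)^{k−1} and ℛ̲ = (1 − p11)^{k−1}. -/
open Finset

/-! With access cap `1` the reward is `1 - ∏ (1 - ω i)`, so switching the first channel from
`0` to `1` gains exactly `∏ (1 - x i)`. This is antitone in every `x i`, so over `[p01, p11]^(k-1)`
it is extremal at the constant vectors `p01` and `p11`. -/

lemma expReward_one {ι : Type*} [DecidableEq ι] (S : Finset ι) (ω : ι → ℝ) :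
    expReward 1 S ω = 1 - ∏ i ∈ S, (1 - ω i) := by
  have hmin (A : Finset ι) : ((min A.card 1 : ℕ) : ℝ) = 1 - if A = ∅ then 1 else 0 := by
    rcases A.eq_empty_or_nonempty with rfl | hA
    · simp
    · simp [hA.ne_empty, Nat.one_le_iff_ne_zero.mpr hA.card_pos.ne']
  have htotal : ∑ A ∈ S.powerset, (∏ i ∈ A, ω i) * ∏ i ∈ S \ A, (1 - ω i) = 1 := by
    rw [← prod_add]
    simp
  simp only [expReward, hmin, mul_sub, mul_one, mul_ite, mul_zero, sum_sub_distrib, htotal,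
    sum_ite_eq', empty_mem_powerset, if_true, prod_empty, sdiff_empty, one_mul]

lemma expReward_one_cons_one_sub_cons_zero {n : ℕ} (x : Fin n → ℝ) :
    expReward 1 univ (Fin.cons 1 x : Fin (n + 1) → ℝ) - expReward 1 univ (Fin.cons 0 x) =
      ∏ i, (1 - x i) := by
  simp [expReward_one, Fin.prod_univ_succ]

lemma RdiffSet_one_eq_image (lo hi : ℝ) (n : ℕ) :
    RdiffSet lo hi 1 n =
      (fun x : Fin n → ℝ => ∏ i, (1 - x i)) '' Set.univ.pi fun _ => Set.Icc lo hi := by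
  ext r
  simp only [RdiffSet, expReward_one_cons_one_sub_cons_zero, Set.mem_image, Set.mem_pi,
    Set.mem_univ, true_implies, Set.mem_ofPred_eq, eq_comm]

lemma prod_one_sub_le_prod_one_sub {ι : Type*} [Fintype ι] {x y : ι → ℝ} (hxy : x ≤ y)
    (hy : ∀ i, y i ≤ 1) : ∏ i, (1 - y i) ≤ ∏ i, (1 - x i) :=
  prod_le_prod (fun i _ => sub_nonneg.mpr (hy i)) fun i _ => sub_le_sub_left (hxy i) 1

section Extremes

variable {ι : Type*} [Fintype ι] {lo hi : ℝ}

lemma isGreatest_prod_one_sub_image_Icc (hlh : lo ≤ hi) (hhi : hi ≤ 1) :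
    IsGreatest ((fun x : ι → ℝ => ∏ i, (1 - x i)) '' Set.univ.pi fun _ => Set.Icc lo hi)
      ((1 - lo) ^ Fintype.card ι) := by
  refine ⟨⟨fun _ => lo, fun _ _ => ⟨le_rfl, hlh⟩, by simp⟩, ?_⟩
  rintro _ ⟨x, hx, rfl⟩
  simpa using prod_one_sub_le_prod_one_sub (fun i => (hx i trivial).1)
    fun i => (hx i trivial).2.trans hhi

lemma isLeast_prod_one_sub_image_Icc (hlh : lo ≤ hi) (hhi : hi ≤ 1) :
    IsLeast ((fun x : ι → ℝ => ∏ i, (1 - x i)) '' Set.univ.pi fun _ => Set.Icc lo hi)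
      ((1 - hi) ^ Fintype.card ι) := by
  refine ⟨⟨fun _ => hi, fun _ _ => ⟨hlh, le_rfl⟩, by simp⟩, ?_⟩
  rintro _ ⟨x, hx, rfl⟩
  simpa using prod_one_sub_le_prod_one_sub (fun i => (hx i trivial).2) fun _ => hhi

end Extremes

theorem Rbar_Rlow_k1_general (p01 p11 : ℝ)
    (h1 : p11 ∈ Set.Icc (0 : ℝ) 1) (hp : p01 ≤ p11) (k : ℕ) :
    Rbar p01 p11 1 (k - 1) = (1 - p01) ^ (k - 1) ∧
      Rlow p01 p11 1 (k - 1) = (1 - p11) ^ (k - 1) := by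
  rw [Rbar, Rlow, RdiffSet_one_eq_image]
  constructor
  · simpa using (isGreatest_prod_one_sub_image_Icc (ι := Fin (k - 1)) hp h1.2).csSup_eq
  · simpa using (isLeast_prod_one_sub_image_Icc (ι := Fin (k - 1)) hp h1.2).csInf_eq

/-- for the `(k, 1)` model with positively correlated channels,
`ℛ̄ = (1 - p01)^(k-1)` and `ℛ̲ = (1 - p11)^(k-1)`. -/
theorem Rbar_Rlow_k1 (p01 p11 : ℝ) (h0 : p01 ∈ Set.Icc (0 : ℝ) 1)
    (h1 : p11 ∈ Set.Icc (0 : ℝ) 1) (hp : p01 ≤ p11) (k : ℕ) (hk : 1 ≤ k) :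
    Rbar p01 p11 1 (k - 1) = (1 - p01) ^ (k - 1) ∧
      Rlow p01 p11 1 (k - 1) = (1 - p11) ^ (k - 1) :=
  Rbar_Rlow_k1_general p01 p11 h1 hp k
end

section
/- Affinity of the myopic value functions: for every t ∈ {1,…,T}, every coordinate j ∈ {1,…,N}, every ω ∈ [0,1]^N, and every x, y ∈ [0,1], it holds that W_t(ω with j-th coordinate x) − W_t(ω with j-th coordinate y) = (x − y) · [W_t(ω with j-th coordinate 1) − W_t(ω with j-th coordinate 0)]; i.e., W_t is an affine function of each coordinate of the belief vector. -/
open Finset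

/-!
Each belief `ω_j` enters the reward and the availability weights
`∏_{i∈A} ω_i ∏_{i∈S∖A} (1 - ω_i)` at most once, so these are affine in `ω_j`. In the
recursion for `W`, a sensed coordinate (`j < k`) is forgotten by the successor belief vector
and so enters only through the weights, while an unsensed coordinate (`k ≤ j`) does not
occur in the weights and reappears in the successor vector in a single slot as `τ(ω_j)`,
with `τ` affine. Induction on the number of remaining steps finishes the argument.
-/

open Function

def affineFunctions : Submodule ℝ (ℝ → ℝ) where
  carrier := {f | ∃ a b : ℝ, ∀ x, f x = a * x + b}
  add_mem' := by
    rintro f g ⟨a, b, hf⟩ ⟨c, d, hg⟩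
    exact ⟨a + c, b + d, fun x => by simp only [Pi.add_apply, hf, hg]; ring⟩
  zero_mem' := ⟨0, 0, by simp⟩
  smul_mem' := by
    rintro c f ⟨a, b, hf⟩
    exact ⟨c * a, c * b, fun x => by simp only [Pi.smul_apply, smul_eq_mul, hf]; ring⟩

namespace affineFunctions

theorem const_mem (c : ℝ) : (fun _ => c) ∈ affineFunctions := ⟨0, c, by simp⟩

theorem id_mem : (fun x => x) ∈ affineFunctions := ⟨1, 0, by simp⟩

theorem one_sub_mem : (fun x => 1 - x) ∈ affineFunctions := ⟨-1, 1, fun x => by ring⟩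

theorem const_mul_mem (c : ℝ) {f : ℝ → ℝ} (hf : f ∈ affineFunctions) :
    (fun x => c * f x) ∈ affineFunctions :=
  affineFunctions.smul_mem c hf

theorem mul_const_mem {f : ℝ → ℝ} (hf : f ∈ affineFunctions) (c : ℝ) :
    (fun x => f x * c) ∈ affineFunctions := by
  simpa only [mul_comm] using const_mul_mem c hf

theorem finsetSum_mem {ι : Type*} (s : Finset ι) {f : ι → ℝ → ℝ}
    (hf : ∀ i ∈ s, f i ∈ affineFunctions) :
    (fun x => ∑ i ∈ s, f i x) ∈ affineFunctions := by
  simpa only [Finset.sum_fn] using affineFunctions.sum_mem hf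

theorem comp_mem {f g : ℝ → ℝ} (hf : f ∈ affineFunctions) (hg : g ∈ affineFunctions) :
    (fun x => f (g x)) ∈ affineFunctions := by
  obtain ⟨a, b, hf⟩ := hf
  obtain ⟨c, d, hg⟩ := hg
  exact ⟨a * c, a * d + b, fun x => by simp only [hf, hg]; ring⟩

theorem sub_eq_mul_sub {f : ℝ → ℝ} (hf : f ∈ affineFunctions) (x y : ℝ) :
    f x - f y = (x - y) * (f 1 - f 0) := by
  obtain ⟨a, b, hf⟩ := hf
  simp only [hf]
  ring

end affineFunctions

theorem tau_mem_affineFunctions (p01 p11 : ℝ) : tau p01 p11 ∈ affineFunctions :=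
  ⟨p11 - p01, p01, fun x => by unfold tau; ring⟩

section Multiaffine

variable {ι : Type*} [DecidableEq ι]

theorem prod_apply_update_of_notMem {s : Finset ι} {j : ι} (hj : j ∉ s) (g : ι → ℝ → ℝ)
    (ω : ι → ℝ) (x : ℝ) :
    ∏ i ∈ s, g i (update ω j x i) = ∏ i ∈ s, g i (ω i) := by
  simp only [apply_update g ω j x]
  exact Finset.prod_update_of_notMem hj _ _

theorem prod_apply_update_mem_affineFunctions (s : Finset ι) {g : ι → ℝ → ℝ}
    (hg : ∀ i, g i ∈ affineFunctions) (ω : ι → ℝ) (j : ι) :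
    (fun x => ∏ i ∈ s, g i (update ω j x i)) ∈ affineFunctions := by
  by_cases hj : j ∈ s
  · simp only [apply_update g ω j, Finset.prod_update_of_mem hj]
    exact affineFunctions.mul_const_mem (hg j) _
  · simp only [prod_apply_update_of_notMem hj]
    exact affineFunctions.const_mem _

def availProb (S A : Finset ι) (ω : ι → ℝ) : ℝ :=
  (∏ i ∈ A, ω i) * ∏ i ∈ S \ A, (1 - ω i)

theorem availProb_eq_prod {S A : Finset ι} (hA : A ⊆ S) (ω : ι → ℝ) :
    availProb S A ω = ∏ i ∈ S, if i ∈ A then ω i else 1 - ω i := by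
  rw [Finset.prod_ite, Finset.filter_mem_eq_inter, Finset.inter_eq_right.mpr hA,
    Finset.filter_notMem_eq_sdiff, availProb]

theorem availProb_update_of_notMem {S A : Finset ι} (hA : A ⊆ S) {j : ι} (hj : j ∉ S)
    (ω : ι → ℝ) (x : ℝ) :
    availProb S A (update ω j x) = availProb S A ω := by
  simp only [availProb_eq_prod hA]
  exact prod_apply_update_of_notMem hj (fun i y => if i ∈ A then y else 1 - y) ω x

theorem availProb_update_mem_affineFunctions {S A : Finset ι} (hA : A ⊆ S) (ω : ι → ℝ)
    (j : ι) : (fun x => availProb S A (update ω j x)) ∈ affineFunctions := by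
  simp only [availProb_eq_prod hA]
  refine prod_apply_update_mem_affineFunctions S (g := fun i y => if i ∈ A then y else 1 - y)
    (fun i => ?_) ω j
  split_ifs
  exacts [affineFunctions.id_mem, affineFunctions.one_sub_mem]

theorem expReward_eq_sum_availProb (m : ℕ) (S : Finset ι) (ω : ι → ℝ) :
    expReward m S ω = ∑ A ∈ S.powerset, availProb S A ω * ((min A.card m : ℕ) : ℝ) :=
  rfl

theorem expReward_update_mem_affineFunctions (m : ℕ) (S : Finset ι) (ω : ι → ℝ) (j : ι) :
    (fun x => expReward m S (update ω j x)) ∈ affineFunctions := by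
  simp only [expReward_eq_sum_availProb]
  exact affineFunctions.finsetSum_mem _ fun A hA =>
    affineFunctions.mul_const_mem
      (availProb_update_mem_affineFunctions (Finset.mem_powerset.mp hA) ω j) _

end Multiaffine

theorem card_le_of_subset_senseSet {N k : ℕ} {A : Finset (Fin N)} (hA : A ⊆ senseSet N k) :
    A.card ≤ k :=
  (Finset.card_le_card hA).trans (Fin.card_filter_val_lt.trans_le (min_le_right N k))

theorem nextPos_update_of_lt (p01 p11 : ℝ) {N k : ℕ} (ω : Fin N → ℝ) {j : Fin N}
    (hj : (j : ℕ) < k) (c : ℕ) (x : ℝ) :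
    nextPos p01 p11 k (update ω j x) c = nextPos p01 p11 k ω c := by
  funext i
  unfold nextPos
  split_ifs
  · rfl
  · rw [update_of_ne (fun h => by have := congrArg Fin.val h; simp only at this; omega)]
  · rfl

theorem nextPos_update_of_le (p01 p11 : ℝ) {N k : ℕ} (ω : Fin N → ℝ) {j : Fin N}
    (hj : k ≤ (j : ℕ)) {c : ℕ} (hc : c ≤ k) (x : ℝ) :
    nextPos p01 p11 k (update ω j x) c =
      update (nextPos p01 p11 k ω c) ⟨c + ((j : ℕ) - k), by omega⟩ (tau p01 p11 x) := by
  funext i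
  by_cases hi : (i : ℕ) = c + ((j : ℕ) - k)
  · rw [show i = ⟨c + ((j : ℕ) - k), by omega⟩ from Fin.ext hi]
    have hslot : (⟨k + (c + ((j : ℕ) - k) - c), by omega⟩ : Fin N) = j := Fin.ext (by simp; omega)
    simp only [nextPos, update_self]
    rw [dif_neg (by omega), dif_pos (by omega), hslot, update_self]
  · rw [update_of_ne (fun h => hi (congrArg Fin.val h))]
    unfold nextPos
    split_ifs
    · rfl
    · rw [update_of_ne (fun h => by have := congrArg Fin.val h; simp only at this; omega)]
    · rfl

theorem Wpos_succ_eq (p01 p11 β : ℝ) (N k m s : ℕ) (ω : Fin N → ℝ) :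
    Wpos p01 p11 β N k m (s + 1) ω =
      expReward m (senseSet N k) ω + β * ∑ A ∈ (senseSet N k).powerset,
        availProb (senseSet N k) A ω * Wpos p01 p11 β N k m s (nextPos p01 p11 k ω A.card) :=
  rfl

theorem Wpos_update_mem_affineFunctions (p01 p11 β : ℝ) (N k m s : ℕ) (ω : Fin N → ℝ)
    (j : Fin N) : (fun x => Wpos p01 p11 β N k m s (update ω j x)) ∈ affineFunctions := by
  induction s generalizing ω j with
  | zero => exact expReward_update_mem_affineFunctions m _ ω j
  | succ s ih =>
    simp only [Wpos_succ_eq]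
    refine affineFunctions.add_mem (expReward_update_mem_affineFunctions m _ ω j)
      (affineFunctions.const_mul_mem β (affineFunctions.finsetSum_mem _ fun A hA => ?_))
    have hAS := Finset.mem_powerset.mp hA
    rcases lt_or_ge (j : ℕ) k with hjk | hkj
    · simp only [nextPos_update_of_lt p01 p11 ω hjk]
      exact affineFunctions.mul_const_mem (availProb_update_mem_affineFunctions hAS ω j) _
    · have hjS : j ∉ senseSet N k := by simp [senseSet, hkj]
      simp only [availProb_update_of_notMem hAS hjS,
        nextPos_update_of_le p01 p11 ω hkj (card_le_of_subset_senseSet hAS)]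
      exact affineFunctions.const_mul_mem _
        (affineFunctions.comp_mem (ih _ _) (tau_mem_affineFunctions p01 p11))

theorem Wpos_affine_general (p01 p11 β : ℝ) (N k m T : ℕ) :
    ∀ t, 1 ≤ t → t ≤ T → ∀ j : Fin N, ∀ ω : Fin N → ℝ,
      (∀ i, ω i ∈ Set.Icc (0 : ℝ) 1) →
      ∀ x y : ℝ, x ∈ Set.Icc (0 : ℝ) 1 → y ∈ Set.Icc (0 : ℝ) 1 →
      Wpos p01 p11 β N k m (T - t) (Function.update ω j x) -
          Wpos p01 p11 β N k m (T - t) (Function.update ω j y) =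
        (x - y) *
          (Wpos p01 p11 β N k m (T - t) (Function.update ω j 1) -
            Wpos p01 p11 β N k m (T - t) (Function.update ω j 0)) :=
  fun t _ _ j ω _ x y _ _ =>
    affineFunctions.sub_eq_mul_sub (Wpos_update_mem_affineFunctions p01 p11 β N k m (T - t) ω j) x y

/-- the myopic value functions are affine in each belief
coordinate. -/
theorem Wpos_affine (p01 p11 β : ℝ) (h0 : p01 ∈ Set.Icc (0 : ℝ) 1)
    (h1 : p11 ∈ Set.Icc (0 : ℝ) 1) (hp : p01 ≤ p11)
    (N k m T : ℕ) (hm : 1 ≤ m) (hmk : m ≤ k) (hkN : k ≤ N) (hT : 1 ≤ T)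
    (hβ0 : 0 ≤ β) (hβ1 : β ≤ 1) :
    ∀ t, 1 ≤ t → t ≤ T → ∀ j : Fin N, ∀ ω : Fin N → ℝ,
      (∀ i, ω i ∈ Set.Icc (0 : ℝ) 1) →
      ∀ x y : ℝ, x ∈ Set.Icc (0 : ℝ) 1 → y ∈ Set.Icc (0 : ℝ) 1 →
      Wpos p01 p11 β N k m (T - t) (Function.update ω j x) -
          Wpos p01 p11 β N k m (T - t) (Function.update ω j y) =
        (x - y) *
          (Wpos p01 p11 β N k m (T - t) (Function.update ω j 1) -
            Wpos p01 p11 β N k m (T - t) (Function.update ω j 0)) :=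
  Wpos_affine_general p01 p11 β N k m T
end

section
/- Key inequality L1 for positively correlated channels: assume p11 ≥ p01, 0 ≤ β ≤ 1, and β·ℛ̄ ≤ ℛ̲. Then for every t ∈ {1,…,T} and every belief vector ω ∈ [0,1]^N with p11 ≥ ω₁ ≥ ω₂ ≥ … ≥ ω_N ≥ p01, it holds that ℛ̄ + W_t(ω_N, ω₁, …, ω_{N−1}) ≥ W_t(ω₁, …, ω_N). -/
open Finset

/-!
Belief vectors are handled as lists. One step of the myopic recursion senses the first `k`
beliefs; by induction on the horizon every `W_s` is affine in each belief, increases when two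
adjacent beliefs are swapped into decreasing order, and loses at most `ℛ̄` when a belief is moved
in front of a block of larger ones (`OrderRegular`). The only real case is a move or swap across
the boundary between sensed and unsensed channels. There the coin of the boundary slot and the
coin of the moved channel are peeled off (`τ w` interpolates affinely between `p11` and `p01`),
reducing the claim to four comparisons of the continuation values, which follow from the induction
hypothesis. The reward difference is an expected marginal gain, lying in `[ℛ̲, ℛ̄]`; for swaps
the condition `β ℛ̄ ≤ ℛ̲` lets it absorb the continuation loss. The theorem is the move property
for the block `ω₁, …, ω_{N-1}` and the belief `ω_N`.
-/

/-- `bernoulliExpect L f = 𝔼[f (X₁ + ⋯ + Xₙ)]` for independent `Xᵢ ~ Bernoulli (L[i])`. -/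
def bernoulliExpect : List ℝ → (ℕ → ℝ) → ℝ
  | [], f => f 0
  | p :: L, f => p * bernoulliExpect L (fun e => f (e + 1)) + (1 - p) * bernoulliExpect L f

namespace bernoulliExpect

theorem congr : ∀ {L : List ℝ} {f g : ℕ → ℝ}, (∀ e ≤ L.length, f e = g e) →
    bernoulliExpect L f = bernoulliExpect L g
  | [], _, _, h => h 0 le_rfl
  | _ :: L, _, _, h => by
    simp only [bernoulliExpect, List.length_cons] at h ⊢
    rw [congr fun e he => h (e + 1) (by omega), congr fun e he => h e (by omega)]

theorem perm {L L' : List ℝ} (h : L.Perm L') (f : ℕ → ℝ) :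
    bernoulliExpect L f = bernoulliExpect L' f := by
  induction h generalizing f with
  | nil => rfl
  | cons _ _ ih => simp only [bernoulliExpect, ih]
  | swap => simp only [bernoulliExpect]; ring
  | trans _ _ ih₁ ih₂ => rw [ih₁, ih₂]

theorem add (L : List ℝ) (f g : ℕ → ℝ) :
    bernoulliExpect L (fun e => f e + g e) = bernoulliExpect L f + bernoulliExpect L g := by
  induction L generalizing f g with
  | nil => rfl
  | cons p L ih => simp only [bernoulliExpect, ih]; ring

theorem const_mul (L : List ℝ) (c : ℝ) (f : ℕ → ℝ) :
    bernoulliExpect L (fun e => c * f e) = c * bernoulliExpect L f := by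
  induction L generalizing f with
  | nil => rfl
  | cons p L ih => simp only [bernoulliExpect, ih]; ring

theorem const (L : List ℝ) (c : ℝ) : bernoulliExpect L (fun _ => c) = c := by
  induction L with
  | nil => rfl
  | cons p L ih => simp only [bernoulliExpect, ih]; ring

theorem sub (L : List ℝ) (f g : ℕ → ℝ) :
    bernoulliExpect L (fun e => f e - g e) = bernoulliExpect L f - bernoulliExpect L g := by
  rw [eq_sub_iff_add_eq, ← add]
  exact congr fun e _ => sub_add_cancel (f e) (g e)

theorem mono : ∀ {L : List ℝ} {f g : ℕ → ℝ}, (∀ p ∈ L, p ∈ Set.Icc 0 1) →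
    (∀ e ≤ L.length, f e ≤ g e) → bernoulliExpect L f ≤ bernoulliExpect L g
  | [], _, _, _, h => h 0 le_rfl
  | p :: L, _, _, hL, h => by
    rw [List.forall_mem_cons] at hL
    simp only [bernoulliExpect, List.length_cons] at h ⊢
    have h₁ := mono hL.2 fun e he => h (e + 1) (by omega)
    have h₂ := mono hL.2 fun e he => h e (by omega)
    exact add_le_add (mul_le_mul_of_nonneg_left h₁ hL.1.1)
      (mul_le_mul_of_nonneg_left h₂ (sub_nonneg.2 hL.1.2))

theorem le_mul_add {L : List ℝ} {f d : ℕ → ℝ} {c c' : ℝ} (hL : ∀ p ∈ L, p ∈ Set.Icc 0 1)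
    (h : ∀ e ≤ L.length, f e ≤ c * d e + c') :
    bernoulliExpect L f ≤ c * bernoulliExpect L d + c' := by
  calc bernoulliExpect L f ≤ bernoulliExpect L (fun e => c * d e + c') := mono hL h
    _ = _ := by rw [add, const_mul, const]

end bernoulliExpect

theorem sum_powerset_toFinset_eq_bernoulliExpect {ι : Type*} [DecidableEq ι] {l : List ι}
    (hl : l.Nodup) (ω : ι → ℝ) (f : ℕ → ℝ) :
    ∑ A ∈ l.toFinset.powerset, (∏ i ∈ A, ω i) * (∏ i ∈ l.toFinset \ A, (1 - ω i)) * f A.card =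
      bernoulliExpect (l.map ω) f := by
  induction l generalizing f with
  | nil => simp [bernoulliExpect]
  | cons a l ih =>
    rw [List.nodup_cons] at hl
    have ha : a ∉ l.toFinset := by simpa using hl.1
    rw [List.toFinset_cons, sum_powerset_insert ha, List.map_cons, bernoulliExpect,
      ← ih hl.2, ← ih hl.2, mul_sum, mul_sum, add_comm]
    congr 1 <;> refine sum_congr rfl fun A hA => ?_ <;> rw [mem_powerset] at hA
    · have haA : a ∉ A := fun h => ha (hA h)
      rw [insert_sdiff_insert, sdiff_insert_of_notMem ha,
        prod_insert haA, card_insert_of_notMem haA]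
      ring
    · rw [insert_sdiff_of_notMem _ fun h => ha (hA h), prod_insert fun h => ha (mem_sdiff.1 h).1]
      ring

def capReward (m e : ℕ) : ℝ := ((min e m : ℕ) : ℝ)

def capGain (m e : ℕ) : ℝ := capReward m (e + 1) - capReward m e

theorem capGain_mem_Icc (m e : ℕ) : capGain m e ∈ Set.Icc 0 1 := by
  have h₁ : min e m ≤ min (e + 1) m := by omega
  have h₂ : min (e + 1) m ≤ min e m + 1 := by omega
  rw [capGain, capReward, capReward, Set.mem_Icc, sub_nonneg, sub_le_iff_le_add']
  exact ⟨mod_cast h₁, mod_cast h₂⟩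

theorem expReward_toFinset {ι : Type*} [DecidableEq ι] {l : List ι} (hl : l.Nodup) (m : ℕ)
    (ω : ι → ℝ) : expReward m l.toFinset ω = bernoulliExpect (l.map ω) (capReward m) :=
  sum_powerset_toFinset_eq_bernoulliExpect hl ω (capReward m)

theorem expReward_cons_one_sub_cons_zero (m : ℕ) {n : ℕ} (x : Fin n → ℝ) :
    expReward m univ (Fin.cons 1 x) - expReward m univ (Fin.cons 0 x) =
      bernoulliExpect (List.ofFn x) (capGain m) := by
  have hcons (w : ℝ) : (List.finRange (n + 1)).map (Fin.cons w x : Fin (n + 1) → ℝ) =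
      w :: List.ofFn x := by
    simp [List.finRange_succ, List.ofFn_eq_map]
  rw [← List.toFinset_finRange, expReward_toFinset (List.nodup_finRange _), hcons,
    expReward_toFinset (List.nodup_finRange _), hcons]
  rw [show capGain m = fun e => capReward m (e + 1) - capReward m e from rfl,
    bernoulliExpect.sub]
  simp only [bernoulliExpect]
  ring

section RdiffSet

variable {lo hi : ℝ} {m : ℕ}

theorem bernoulliExpect_capGain_mem_RdiffSet {M : List ℝ} (hM : ∀ z ∈ M, z ∈ Set.Icc lo hi) :
    bernoulliExpect M (capGain m) ∈ RdiffSet lo hi m M.length :=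
  ⟨fun i => M[(i : ℕ)], fun i => hM _ (List.getElem_mem i.isLt), by
    rw [expReward_cons_one_sub_cons_zero, List.ofFn_getElem (xs := M)]⟩

theorem RdiffSet_subset_Icc (hlo : 0 ≤ lo) (hhi : hi ≤ 1) (n : ℕ) :
    RdiffSet lo hi m n ⊆ Set.Icc 0 1 := by
  rintro _ ⟨x, hx, rfl⟩
  have hx01 : ∀ p ∈ List.ofFn x, p ∈ Set.Icc 0 1 := by
    simp only [List.mem_ofFn, forall_exists_index, forall_apply_eq_imp_iff]
    exact fun i => ⟨hlo.trans (hx i).1, (hx i).2.trans hhi⟩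
  rw [expReward_cons_one_sub_cons_zero]
  constructor
  · simpa [bernoulliExpect.const] using
      bernoulliExpect.mono hx01 (f := fun _ => 0) fun e _ => (capGain_mem_Icc m e).1
  · simpa [bernoulliExpect.const] using
      bernoulliExpect.mono hx01 (g := fun _ => 1) fun e _ => (capGain_mem_Icc m e).2

theorem Rlow_le (hlo : 0 ≤ lo) (hhi : hi ≤ 1) {n : ℕ} {r : ℝ} (hr : r ∈ RdiffSet lo hi m n) :
    Rlow lo hi m n ≤ r :=
  csInf_le ⟨0, fun _ hr => (RdiffSet_subset_Icc hlo hhi _ hr).1⟩ hr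

theorem le_Rbar (hlo : 0 ≤ lo) (hhi : hi ≤ 1) {n : ℕ} {r : ℝ} (hr : r ∈ RdiffSet lo hi m n) :
    r ≤ Rbar lo hi m n :=
  le_csSup ⟨1, fun _ hr => (RdiffSet_subset_Icc hlo hhi _ hr).2⟩ hr

theorem Rbar_nonneg (hlo : 0 ≤ lo) (hle : lo ≤ hi) (hhi : hi ≤ 1) (n : ℕ) :
    0 ≤ Rbar lo hi m n := by
  have hrep : ∀ z ∈ List.replicate n lo, z ∈ Set.Icc lo hi := by simp [hle]
  have h := bernoulliExpect_capGain_mem_RdiffSet (m := m) hrep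
  rw [List.length_replicate] at h
  exact (RdiffSet_subset_Icc hlo hhi n h).1.trans (le_Rbar hlo hhi h)

end RdiffSet

section OrderRegular

variable (S : Set ℝ) (F : List ℝ → ℝ)

def SwapMonotoneOn : Prop :=
  ∀ C D : List ℝ, ∀ x y : ℝ, (∀ z ∈ C ++ x :: y :: D, z ∈ S) → y ≤ x →
    F (C ++ y :: x :: D) ≤ F (C ++ x :: y :: D)

def MoveForwardBounded (c : ℝ) : Prop :=
  ∀ C B D : List ℝ, ∀ a : ℝ, (∀ z ∈ C ++ B ++ a :: D, z ∈ S) → (∀ b ∈ B, a ≤ b) →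
    F (C ++ B ++ a :: D) ≤ F (C ++ a :: (B ++ D)) + c

def SlotAffine : Prop :=
  ∀ A B : List ℝ, ∀ u v θ : ℝ,
    F (A ++ (θ * u + (1 - θ) * v) :: B) = θ * F (A ++ u :: B) + (1 - θ) * F (A ++ v :: B)

structure OrderRegular (c : ℝ) : Prop where
  affine : SlotAffine F
  swap : SwapMonotoneOn S F
  move : MoveForwardBounded S F c

variable {S F}

theorem SwapMonotoneOn.move_forward (hF : SwapMonotoneOn S F) {z : ℝ} {D : List ℝ} :
    ∀ {C B : List ℝ}, (∀ w ∈ C ++ B ++ z :: D, w ∈ S) → (∀ b ∈ B, b ≤ z) →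
      F (C ++ B ++ z :: D) ≤ F (C ++ z :: (B ++ D))
  | C, [], _, _ => by simp
  | C, b :: B, hS, hz => by
    rw [List.forall_mem_cons] at hz
    calc F (C ++ b :: B ++ z :: D) = F ((C ++ [b]) ++ B ++ z :: D) := by simp
      _ ≤ F ((C ++ [b]) ++ z :: (B ++ D)) := hF.move_forward (by simpa using hS) hz.2
      _ = F (C ++ b :: z :: (B ++ D)) := by simp
      _ ≤ F (C ++ z :: b :: (B ++ D)) :=
        hF C _ z b (fun w hw => hS w (by simp at hw ⊢; tauto)) hz.1

theorem SwapMonotoneOn.move_backward (hF : SwapMonotoneOn S F) {z : ℝ} {D : List ℝ} :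
    ∀ {C B : List ℝ}, (∀ w ∈ C ++ B ++ z :: D, w ∈ S) → (∀ b ∈ B, z ≤ b) →
      F (C ++ z :: (B ++ D)) ≤ F (C ++ B ++ z :: D)
  | C, [], _, _ => by simp
  | C, b :: B, hS, hz => by
    rw [List.forall_mem_cons] at hz
    calc F (C ++ z :: b :: (B ++ D)) ≤ F (C ++ b :: z :: (B ++ D)) :=
        hF C _ b z (fun w hw => hS w (by simp at hw ⊢; tauto)) hz.1
      _ = F ((C ++ [b]) ++ z :: (B ++ D)) := by simp
      _ ≤ F ((C ++ [b]) ++ B ++ z :: D) := hF.move_backward (by simpa using hS) hz.2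
      _ = F (C ++ b :: B ++ z :: D) := by simp

theorem SwapMonotoneOn.move_max_forward {lo hi : ℝ} (hF : SwapMonotoneOn (Set.Icc lo hi) F)
    (hle : lo ≤ hi) {X Y : List ℝ} (hX : ∀ z ∈ X, z ∈ Set.Icc lo hi)
    (hY : ∀ z ∈ Y, z ∈ Set.Icc lo hi) : F (X ++ hi :: Y) ≤ F (hi :: (X ++ Y)) :=
  hF.move_forward (C := []) (by aesop) fun z hz => (hX z hz).2

theorem SwapMonotoneOn.move_min_backward {lo hi : ℝ} (hF : SwapMonotoneOn (Set.Icc lo hi) F)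
    (hle : lo ≤ hi) {X Y : List ℝ} (hX : ∀ z ∈ X, z ∈ Set.Icc lo hi)
    (hY : ∀ z ∈ Y, z ∈ Set.Icc lo hi) : F (X ++ lo :: Y) ≤ F (X ++ Y ++ [lo]) := by
  simpa using hF.move_backward (C := X) (B := Y) (D := []) (by aesop) fun z hz => (hY z hz).1

theorem MoveForwardBounded.move_min_forward {lo hi c : ℝ}
    (hF : MoveForwardBounded (Set.Icc lo hi) F c) (hle : lo ≤ hi) {X Y : List ℝ}
    (hX : ∀ z ∈ X, z ∈ Set.Icc lo hi) (hY : ∀ z ∈ Y, z ∈ Set.Icc lo hi) :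
    F (X ++ lo :: Y) ≤ F (lo :: (X ++ Y)) + c := by
  simpa using hF [] X Y lo (by aesop) fun z hz => (hX z hz).1

theorem OrderRegular.comp_append {c : ℝ} (hF : OrderRegular S F c) {P Q : List ℝ}
    (hP : ∀ z ∈ P, z ∈ S) (hQ : ∀ z ∈ Q, z ∈ S) :
    OrderRegular S (fun R => F (P ++ R ++ Q)) c where
  affine A B u v θ := by simpa using hF.affine (P ++ A) (B ++ Q) u v θ
  swap C D x y hS hxy := by
    simpa using hF.swap (P ++ C) (D ++ Q) x y (by aesop) hxy
  move C B D a hS haB := by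
    simpa using hF.move (P ++ C) B (D ++ Q) a (by aesop) haB

theorem orderRegular_zero {c : ℝ} (hc : 0 ≤ c) : OrderRegular S (fun _ => 0) c where
  affine _ _ _ _ _ := by ring
  swap _ _ _ _ _ _ := le_rfl
  move _ _ _ _ _ _ := by simpa using hc

end OrderRegular

section StepValue

variable {p01 p11 β : ℝ} {k m : ℕ} {G : ℕ → List ℝ → ℝ}

theorem tau_mem_Icc (hp : p01 ≤ p11) {w : ℝ} (hw : w ∈ Set.Icc 0 1) :
    tau p01 p11 w ∈ Set.Icc p01 p11 := by
  unfold tau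
  constructor <;> nlinarith [hw.1, hw.2]

theorem tau_mono (hp : p01 ≤ p11) : Monotone (tau p01 p11) := fun x y h => by
  unfold tau
  nlinarith

theorem tau_affine (u v θ : ℝ) :
    tau p01 p11 (θ * u + (1 - θ) * v) = θ * tau p01 p11 u + (1 - θ) * tau p01 p11 v := by
  unfold tau
  ring

variable (p01 p11 β k m) in
/-- One step of the myopic recursion: the first `k` entries are sensed, and `G e` values the
updated beliefs of the unsensed channels when `e` sensed channels were available. -/
def stepValue (G : ℕ → List ℝ → ℝ) (L : List ℝ) : ℝ :=
  bernoulliExpect (L.take k) fun e => capReward m e + β * G e ((L.drop k).map (tau p01 p11))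

theorem stepValue_perm_append {A A' : List ℝ} (hA : A.Perm A') (hk : A.length ≤ k)
    (B : List ℝ) : stepValue p01 p11 β k m G (A ++ B) = stepValue p01 p11 β k m G (A' ++ B) := by
  have hk' : A'.length ≤ k := hA.length_eq ▸ hk
  simp only [stepValue, List.take_append, List.drop_append, List.take_of_length_le hk,
    List.take_of_length_le hk', List.drop_eq_nil_of_le hk, List.drop_eq_nil_of_le hk',
    hA.length_eq]
  exact bernoulliExpect.perm (hA.append_right _) _

theorem stepValue_append_of_le_length {A : List ℝ} (hk : k ≤ A.length) (B : List ℝ) :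
    stepValue p01 p11 β k m G (A ++ B) = bernoulliExpect (A.take k)
      fun e => capReward m e + β * G e ((A.drop k ++ B).map (tau p01 p11)) := by
  rw [stepValue, List.take_append_of_le_length hk, List.drop_append_of_le_length hk]

theorem stepValue_cons (hk : 0 < k) (w : ℝ) (L : List ℝ) :
    stepValue p01 p11 β k m G (w :: L) = bernoulliExpect (w :: L.take (k - 1))
      fun e => capReward m e + β * G e ((L.drop (k - 1)).map (tau p01 p11)) := by
  obtain ⟨k, rfl⟩ := Nat.exists_eq_add_of_lt hk
  rfl

theorem stepValue_boundary {M : List ℝ} (hM : M.length + 1 = k) (w : ℝ) (R : List ℝ) :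
    stepValue p01 p11 β k m G (M ++ w :: R) = bernoulliExpect M fun e =>
      w * (capReward m (e + 1) + β * G (e + 1) (R.map (tau p01 p11))) +
        (1 - w) * (capReward m e + β * G e (R.map (tau p01 p11))) := by
  have hlen : (M ++ [w]).length = k := by simpa using hM
  rw [← List.singleton_append, ← List.append_assoc, stepValue, List.take_left' hlen,
    List.drop_left' hlen, bernoulliExpect.perm (List.perm_append_singleton w M),
    bernoulliExpect, ← bernoulliExpect.const_mul, ← bernoulliExpect.const_mul,
    ← bernoulliExpect.add]

theorem slotAffine_stepValue (hG : ∀ e, SlotAffine (G e)) :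
    SlotAffine (stepValue p01 p11 β k m G) := by
  intro A B u v θ
  rcases lt_or_ge A.length k with hA | hA
  · have hfront (w : ℝ) : stepValue p01 p11 β k m G (A ++ w :: B) =
        stepValue p01 p11 β k m G (w :: (A ++ B)) := by
      rw [← List.singleton_append, ← List.append_assoc,
        stepValue_perm_append (List.perm_append_singleton w A) (by simp; omega)]
      rfl
    simp only [hfront, stepValue_cons (Nat.zero_lt_of_lt hA), bernoulliExpect]
    ring
  · simp only [SlotAffine] at hG
    simp only [stepValue_append_of_le_length hA, List.map_append, List.map_cons, tau_affine, hG]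
    rw [← bernoulliExpect.const_mul, ← bernoulliExpect.const_mul, ← bernoulliExpect.add]
    exact bernoulliExpect.congr fun e _ => by ring

theorem forall_mem_map_tau (h01 : 0 ≤ p01) (hp : p01 ≤ p11) (h11 : p11 ≤ 1) {L : List ℝ}
    (hL : ∀ z ∈ L, z ∈ Set.Icc p01 p11) : ∀ z ∈ L.map (tau p01 p11), z ∈ Set.Icc p01 p11 :=
  List.forall_mem_map.2 fun z hz => tau_mem_Icc hp (Set.Icc_subset_Icc h01 h11 (hL z hz))

theorem stepValue_swap_boundary (h01 : 0 ≤ p01) (hp : p01 ≤ p11) (h11 : p11 ≤ 1) (hβ : 0 ≤ β)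
    (hcond : β * Rbar p01 p11 m (k - 1) ≤ Rlow p01 p11 m (k - 1))
    (haff : ∀ e, SlotAffine (G e))
    (hmove : ∀ e, MoveForwardBounded (Set.Icc p01 p11) (G e) (Rbar p01 p11 m (k - 1)))
    (hshift : ∀ e < k, ∀ R, G e (p11 :: R) = G (e + 1) (R ++ [p01]))
    {C D : List ℝ} {x y : ℝ} (hC : C.length + 1 = k)
    (hS : ∀ z ∈ C ++ x :: y :: D, z ∈ Set.Icc p01 p11) (hxy : y ≤ x) :
    stepValue p01 p11 β k m G (C ++ y :: x :: D) ≤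
      stepValue p01 p11 β k m G (C ++ x :: y :: D) := by
  simp only [List.forall_mem_append, List.forall_mem_cons] at hS
  obtain ⟨hCS, -, -, hDS⟩ := hS
  set D' := D.map (tau p01 p11)
  have hD' : ∀ z ∈ D', z ∈ Set.Icc p01 p11 := forall_mem_map_tau h01 hp h11 hDS
  have hpeel (c : ℕ) (w : ℝ) : G c ((w :: D).map (tau p01 p11)) =
      w * G c (p11 :: D') + (1 - w) * G c (p01 :: D') := haff c [] D' p11 p01 w
  have hgap (e : ℕ) (he : e < k) :
      G e (p11 :: D') ≤ G (e + 1) (p01 :: D') + Rbar p01 p11 m (k - 1) := by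
    rw [hshift e he]
    simpa using (hmove (e + 1)).move_min_forward hp hD' (Y := []) (by simp)
  rw [stepValue_boundary hC, stepValue_boundary hC]
  have hC01 : ∀ z ∈ C, z ∈ Set.Icc 0 1 := fun z hz => Set.Icc_subset_Icc h01 h11 (hCS z hz)
  rw [← sub_nonpos, ← bernoulliExpect.sub]
  refine (bernoulliExpect.le_mul_add hC01 (c := y - x) (d := capGain m)
    (c' := (x - y) * (β * Rbar p01 p11 m (k - 1))) fun e he => ?_).trans ?_
  · simp only [hpeel, capGain]
    nlinarith [mul_le_mul_of_nonneg_left (hgap e (by omega)) (mul_nonneg (sub_nonneg.2 hxy) hβ)]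
  · have hlow : Rlow p01 p11 m (k - 1) ≤ bernoulliExpect C (capGain m) :=
      Rlow_le h01 h11 ((show C.length = k - 1 by omega) ▸ bernoulliExpect_capGain_mem_RdiffSet hCS)
    nlinarith [mul_le_mul_of_nonneg_left (hcond.trans hlow) (sub_nonneg.2 hxy)]

/-- Couple the coins of the boundary slot (probability `b`) and of the moved channel
(probability `a`) on both sides; `uᵢⱼ`/`vᵢⱼ` are the continuation values for the outcomes. -/
theorem two_coin_coupling {a b β r₀ r₁ R u₁₁ u₁₀ u₀₁ u₀₀ v₁₁ v₁₀ v₀₁ v₀₀ : ℝ} (ha : 0 ≤ a)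
    (hab : a ≤ b) (hb : b ≤ 1) (hβ : 0 ≤ β) (h₁₁ : u₁₁ ≤ v₁₁) (h₁₀ : u₁₀ ≤ v₀₁)
    (h₀₁ : u₀₁ ≤ v₁₀ + R) (h₀₀ : u₀₀ ≤ v₀₀ + R) :
    b * (r₁ + β * (a * u₁₁ + (1 - a) * u₁₀)) + (1 - b) * (r₀ + β * (a * u₀₁ + (1 - a) * u₀₀)) -
        (a * (r₁ + β * (b * v₁₁ + (1 - b) * v₁₀)) +
          (1 - a) * (r₀ + β * (b * v₀₁ + (1 - b) * v₀₀))) ≤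
      (b - a) * (r₁ - r₀) + β * (1 - b) * R := by
  have hb0 : 0 ≤ b := ha.trans hab
  have ha1 : a ≤ 1 := hab.trans hb
  nlinarith [mul_nonneg (mul_nonneg hβ (mul_nonneg ha hb0)) (sub_nonneg.2 h₁₁),
    mul_nonneg (mul_nonneg hβ (mul_nonneg hb0 (sub_nonneg.2 ha1))) (sub_nonneg.2 h₁₀),
    mul_nonneg (mul_nonneg hβ (mul_nonneg ha (sub_nonneg.2 hb))) (sub_nonneg.2 h₀₁),
    mul_nonneg (mul_nonneg hβ (mul_nonneg (sub_nonneg.2 ha1) (sub_nonneg.2 hb)))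
      (sub_nonneg.2 h₀₀)]

theorem stepValue_move_boundary (h01 : 0 ≤ p01) (hp : p01 ≤ p11) (h11 : p11 ≤ 1) (hβ0 : 0 ≤ β)
    (hβ1 : β ≤ 1) (hG : ∀ e, OrderRegular (Set.Icc p01 p11) (G e) (Rbar p01 p11 m (k - 1)))
    (hshift : ∀ e < k, ∀ R, G e (p11 :: R) = G (e + 1) (R ++ [p01]))
    {M B D : List ℝ} {a b : ℝ} (hM : M.length + 1 = k)
    (hS : ∀ z ∈ M ++ b :: (B ++ a :: D), z ∈ Set.Icc p01 p11) (hab : a ≤ b) :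
    stepValue p01 p11 β k m G (M ++ b :: (B ++ a :: D)) ≤
      stepValue p01 p11 β k m G (M ++ a :: b :: (B ++ D)) + Rbar p01 p11 m (k - 1) := by
  simp only [List.forall_mem_append, List.forall_mem_cons] at hS
  obtain ⟨hMS, hb, hBS, ha, hDS⟩ := hS
  set B' := B.map (tau p01 p11)
  set D' := D.map (tau p01 p11)
  have hB' : ∀ z ∈ B', z ∈ Set.Icc p01 p11 := forall_mem_map_tau h01 hp h11 hBS
  have hD' : ∀ z ∈ D', z ∈ Set.Icc p01 p11 := forall_mem_map_tau h01 hp h11 hDS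
  have hpeelU (c : ℕ) : G c ((B ++ a :: D).map (tau p01 p11)) =
      a * G c (B' ++ p11 :: D') + (1 - a) * G c (B' ++ p01 :: D') := by
    rw [List.map_append, List.map_cons]
    exact (hG c).affine B' D' p11 p01 a
  have hpeelV (c : ℕ) : G c ((b :: (B ++ D)).map (tau p01 p11)) =
      b * G c (p11 :: (B' ++ D')) + (1 - b) * G c (p01 :: (B' ++ D')) := by
    rw [List.map_cons, List.map_append]
    exact (hG c).affine [] _ p11 p01 b
  have hM01 : ∀ z ∈ M, z ∈ Set.Icc 0 1 := fun z hz => Set.Icc_subset_Icc h01 h11 (hMS z hz)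
  rw [stepValue_boundary hM, stepValue_boundary hM, ← sub_le_iff_le_add', ← bernoulliExpect.sub]
  refine (bernoulliExpect.le_mul_add hM01 (c := b - a) (d := capGain m)
    (c' := β * (1 - b) * Rbar p01 p11 m (k - 1)) fun e he => ?_).trans ?_
  · have he' : e < k := by omega
    simp only [hpeelU, hpeelV, capGain]
    refine two_coin_coupling (h01.trans ha.1) hab (hb.2.trans h11) hβ0
      ((hG (e + 1)).swap.move_max_forward hp hB' hD')
      (((hG (e + 1)).swap.move_min_backward hp hB' hD').trans_eq (hshift e he' _).symm)
      (((hG e).swap.move_max_forward hp hB' hD').trans ?_) ((hG e).move.move_min_forward hp hB' hD')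
    rw [hshift e he']
    simpa using (hG (e + 1)).move.move_min_forward hp (X := B' ++ D') (Y := []) (List.forall_mem_append.2 ⟨hB', hD'⟩) (by simp)
  · have hR := Rbar_nonneg (m := m) h01 hp h11 (k - 1)
    have hgain : bernoulliExpect M (capGain m) ≤ Rbar p01 p11 m (k - 1) :=
      le_Rbar h01 h11 ((show M.length = k - 1 by omega) ▸ bernoulliExpect_capGain_mem_RdiffSet hMS)
    nlinarith [mul_le_mul_of_nonneg_left hgain (sub_nonneg.2 hab), h01.trans ha.1,
      mul_le_mul_of_nonneg_right hβ1 (mul_nonneg (sub_nonneg.2 (hb.2.trans h11)) hR)]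

theorem stepValue_swap_of_le_length (h01 : 0 ≤ p01) (hp : p01 ≤ p11) (h11 : p11 ≤ 1)
    (hβ : 0 ≤ β) (hswap : ∀ e, SwapMonotoneOn (Set.Icc p01 p11) (G e))
    {C D : List ℝ} {x y : ℝ} (hC : k ≤ C.length)
    (hS : ∀ z ∈ C ++ x :: y :: D, z ∈ Set.Icc p01 p11) (hxy : y ≤ x) :
    stepValue p01 p11 β k m G (C ++ y :: x :: D) ≤
      stepValue p01 p11 β k m G (C ++ x :: y :: D) := by
  have hS' : ∀ z ∈ C.drop k ++ x :: y :: D, z ∈ Set.Icc p01 p11 := fun z hz =>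
    hS z (((List.drop_sublist k C).append_right _).subset hz)
  rw [stepValue_append_of_le_length hC, stepValue_append_of_le_length hC]
  refine bernoulliExpect.mono (fun z hz => ?_) fun e _ => ?_
  · exact Set.Icc_subset_Icc h01 h11 (hS z (List.mem_append_left _ (List.mem_of_mem_take hz)))
  · simp only [List.map_append, List.map_cons]
    gcongr
    exact hswap e _ _ _ _ (by simpa using forall_mem_map_tau h01 hp h11 hS') (tau_mono hp hxy)

theorem swapMonotoneOn_stepValue (h01 : 0 ≤ p01) (hp : p01 ≤ p11) (h11 : p11 ≤ 1) (hβ : 0 ≤ β)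
    (hcond : β * Rbar p01 p11 m (k - 1) ≤ Rlow p01 p11 m (k - 1))
    (hG : ∀ e, OrderRegular (Set.Icc p01 p11) (G e) (Rbar p01 p11 m (k - 1)))
    (hshift : ∀ e < k, ∀ R, G e (p11 :: R) = G (e + 1) (R ++ [p01])) :
    SwapMonotoneOn (Set.Icc p01 p11) (stepValue p01 p11 β k m G) := by
  intro C D x y hS hxy
  rcases lt_trichotomy (C.length + 1) k with hC | hC | hC
  · have h := stepValue_perm_append (p01 := p01) (p11 := p11) (β := β) (k := k) (m := m) (G := G)
      ((List.Perm.swap x y []).append_left C) (by simp; omega) D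
    simpa using h.le
  · exact stepValue_swap_boundary h01 hp h11 hβ hcond (fun e => (hG e).affine)
      (fun e => (hG e).move) hshift hC hS hxy
  · exact stepValue_swap_of_le_length h01 hp h11 hβ (fun e => (hG e).swap) (by omega) hS hxy

theorem stepValue_move_of_le_length (h01 : 0 ≤ p01) (hp : p01 ≤ p11) (h11 : p11 ≤ 1)
    (hβ0 : 0 ≤ β) (hβ1 : β ≤ 1)
    (hmove : ∀ e, MoveForwardBounded (Set.Icc p01 p11) (G e) (Rbar p01 p11 m (k - 1)))
    {C B D : List ℝ} {a : ℝ} (hC : k ≤ C.length)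
    (hS : ∀ z ∈ C ++ B ++ a :: D, z ∈ Set.Icc p01 p11) (haB : ∀ b ∈ B, a ≤ b) :
    stepValue p01 p11 β k m G (C ++ B ++ a :: D) ≤
      stepValue p01 p11 β k m G (C ++ a :: (B ++ D)) + Rbar p01 p11 m (k - 1) := by
  have hS' : ∀ z ∈ C.drop k ++ B ++ a :: D, z ∈ Set.Icc p01 p11 := fun z hz =>
    hS z ((((List.drop_sublist k C).append_right B).append_right _).subset hz)
  rw [List.append_assoc, stepValue_append_of_le_length hC, stepValue_append_of_le_length hC,
    ← sub_le_iff_le_add', ← bernoulliExpect.sub]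
  refine (bernoulliExpect.mono (g := fun _ => β * Rbar p01 p11 m (k - 1)) (fun z hz => ?_)
    fun e _ => ?_).trans ?_
  · exact Set.Icc_subset_Icc h01 h11
      (hS z (List.mem_append_left _ (List.mem_append_left _ (List.mem_of_mem_take hz))))
  · have h := hmove e ((C.drop k).map (tau p01 p11)) (B.map (tau p01 p11))
      (D.map (tau p01 p11)) (tau p01 p11 a)
      (by simpa only [List.map_append, List.map_cons] using forall_mem_map_tau h01 hp h11 hS')
      (List.forall_mem_map.2 fun z hz => tau_mono hp (haB z hz))
    simp only [List.map_append, List.map_cons, List.append_assoc] at h ⊢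
    linarith [mul_le_mul_of_nonneg_left h hβ0]
  · rw [bernoulliExpect.const]
    nlinarith [Rbar_nonneg (m := m) h01 hp h11 (k - 1)]

theorem moveForwardBounded_stepValue (h01 : 0 ≤ p01) (hp : p01 ≤ p11) (h11 : p11 ≤ 1)
    (hβ0 : 0 ≤ β) (hβ1 : β ≤ 1)
    (hG : ∀ e, OrderRegular (Set.Icc p01 p11) (G e) (Rbar p01 p11 m (k - 1)))
    (hshift : ∀ e < k, ∀ R, G e (p11 :: R) = G (e + 1) (R ++ [p01])) :
    MoveForwardBounded (Set.Icc p01 p11) (stepValue p01 p11 β k m G) (Rbar p01 p11 m (k - 1)) := by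
  intro C B D a hS haB
  rcases le_or_gt (C.length + B.length + 1) k with hk | hk
  · have h := stepValue_perm_append (p01 := p01) (p11 := p11) (β := β) (k := k) (m := m) (G := G)
      (A := C ++ B ++ [a]) (by simpa using (List.perm_append_singleton a B).append_left C)
      (by simp; omega) D
    simp only [List.append_assoc, List.cons_append, List.nil_append] at h ⊢
    linarith [Rbar_nonneg (m := m) h01 hp h11 (k - 1)]
  rcases lt_or_ge C.length k with hCk | hCk
  · obtain ⟨B₁, b, B₂, rfl, hB₁⟩ : ∃ B₁ b B₂, B = B₁ ++ b :: B₂ ∧ B₁.length = k - 1 - C.length :=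
      ⟨B.take (k - 1 - C.length), B[k - 1 - C.length], B.drop (k - 1 - C.length + 1),
        by rw [← List.drop_eq_getElem_cons, List.take_append_drop], by simp; omega⟩
    have hM : (C ++ B₁).length + 1 = k := by simp; omega
    have hv := stepValue_perm_append (p01 := p01) (p11 := p11) (β := β) (k := k) (m := m)
      (G := G) (A := C ++ a :: B₁) ((List.perm_append_singleton a B₁).symm.append_left C)
      (by simp; omega) (b :: (B₂ ++ D))
    calc stepValue p01 p11 β k m G (C ++ (B₁ ++ b :: B₂) ++ a :: D)
        = stepValue p01 p11 β k m G ((C ++ B₁) ++ b :: (B₂ ++ a :: D)) := by simp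
      _ ≤ stepValue p01 p11 β k m G ((C ++ B₁) ++ a :: b :: (B₂ ++ D)) + Rbar p01 p11 m (k - 1) :=
        stepValue_move_boundary h01 hp h11 hβ0 hβ1 hG hshift hM (by simpa using hS)
          (haB b (by simp))
      _ = stepValue p01 p11 β k m G (C ++ a :: (B₁ ++ b :: B₂ ++ D)) + Rbar p01 p11 m (k - 1) := by
        simpa using hv.symm
  · exact stepValue_move_of_le_length h01 hp h11 hβ0 hβ1 (fun e => (hG e).move) hCk hS haB

theorem orderRegular_stepValue (h01 : 0 ≤ p01) (hp : p01 ≤ p11) (h11 : p11 ≤ 1) (hβ0 : 0 ≤ β)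
    (hβ1 : β ≤ 1) (hcond : β * Rbar p01 p11 m (k - 1) ≤ Rlow p01 p11 m (k - 1))
    (hG : ∀ e, OrderRegular (Set.Icc p01 p11) (G e) (Rbar p01 p11 m (k - 1)))
    (hshift : ∀ e < k, ∀ R, G e (p11 :: R) = G (e + 1) (R ++ [p01])) :
    OrderRegular (Set.Icc p01 p11) (stepValue p01 p11 β k m G) (Rbar p01 p11 m (k - 1)) where
  affine := slotAffine_stepValue fun e => (hG e).affine
  swap := swapMonotoneOn_stepValue h01 hp h11 hβ0 hcond hG hshift
  move := moveForwardBounded_stepValue h01 hp h11 hβ0 hβ1 hG hshift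

end StepValue

section Myopic

variable (p01 p11 β : ℝ) (k m : ℕ)

def attachSensed (e : ℕ) (R : List ℝ) : List ℝ :=
  List.replicate e p11 ++ R ++ List.replicate (k - e) p01

/-- `Wpos` on belief lists, by the number of remaining steps. -/
def myopicValue : ℕ → List ℝ → ℝ
  | 0 => stepValue p01 p11 β k m fun _ _ => 0
  | s + 1 => stepValue p01 p11 β k m fun e R => myopicValue s (attachSensed p01 p11 k e R)

variable {p01 p11 β k m}

theorem attachSensed_p11_cons {e : ℕ} (he : e < k) (R : List ℝ) :
    attachSensed p01 p11 k e (p11 :: R) = attachSensed p01 p11 k (e + 1) (R ++ [p01]) := by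
  rw [attachSensed, attachSensed, show k - e = k - (e + 1) + 1 by omega, List.replicate_succ,
    List.replicate_succ']
  simp

theorem orderRegular_myopicValue (h01 : 0 ≤ p01) (hp : p01 ≤ p11) (h11 : p11 ≤ 1) (hβ0 : 0 ≤ β)
    (hβ1 : β ≤ 1) (hcond : β * Rbar p01 p11 m (k - 1) ≤ Rlow p01 p11 m (k - 1)) :
    ∀ s, OrderRegular (Set.Icc p01 p11) (myopicValue p01 p11 β k m s) (Rbar p01 p11 m (k - 1))
  | 0 => orderRegular_stepValue h01 hp h11 hβ0 hβ1 hcond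
      (fun _ => orderRegular_zero (Rbar_nonneg h01 hp h11 _)) fun _ _ _ => rfl
  | s + 1 => orderRegular_stepValue h01 hp h11 hβ0 hβ1 hcond
      (fun e => (orderRegular_myopicValue h01 hp h11 hβ0 hβ1 hcond s).comp_append
        (by simp [hp]) (by simp [hp]))
      fun e he R => by simp only [attachSensed_p11_cons he]

end Myopic

section Wpos

variable {p01 p11 β : ℝ} {N k m : ℕ}

theorem senseSet_eq_toFinset (N k : ℕ) : senseSet N k = ((List.finRange N).take k).toFinset := by
  ext i
  simp only [senseSet, mem_filter, mem_univ, true_and, List.mem_toFinset, List.mem_iff_getElem,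
    List.length_take, List.length_finRange, List.getElem_take, List.getElem_finRange]
  exact ⟨fun h => ⟨i, by omega, rfl⟩, by rintro ⟨j, hj, rfl⟩; simp; omega⟩

theorem sum_powerset_senseSet (ω : Fin N → ℝ) (f : ℕ → ℝ) :
    ∑ A ∈ (senseSet N k).powerset, (∏ i ∈ A, ω i) * (∏ i ∈ senseSet N k \ A, (1 - ω i)) * f A.card =
      bernoulliExpect ((List.ofFn ω).take k) f := by
  rw [senseSet_eq_toFinset, sum_powerset_toFinset_eq_bernoulliExpect
    ((List.take_sublist _ _).nodup (List.nodup_finRange N)), List.map_take, ← List.ofFn_eq_map]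

theorem expReward_senseSet (ω : Fin N → ℝ) :
    expReward m (senseSet N k) ω = bernoulliExpect ((List.ofFn ω).take k) (capReward m) :=
  sum_powerset_senseSet ω (capReward m)

theorem ofFn_nextPos {c : ℕ} (hc : c ≤ k) (hk : k ≤ N) (ω : Fin N → ℝ) :
    List.ofFn (nextPos p01 p11 k ω c) =
      attachSensed p01 p11 k c (((List.ofFn ω).drop k).map (tau p01 p11)) := by
  apply List.ext_getElem (by simp [attachSensed]; omega)
  intro i hi _
  simp only [List.getElem_ofFn, nextPos, attachSensed]
  have hi : i < N := by simpa using hi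
  split_ifs with h₁ h₂
  · rw [List.getElem_append_left (by simp; omega), List.getElem_append_left (by simpa using h₁),
      List.getElem_replicate]
  · rw [List.getElem_append_left (by simp; omega), List.getElem_append_right (by simpa using h₁)]
    simp
  · rw [List.getElem_append_right (by simp; omega), List.getElem_replicate]

theorem Wpos_eq_myopicValue (hk : k ≤ N) :
    ∀ s ω, Wpos p01 p11 β N k m s ω = myopicValue p01 p11 β k m s (List.ofFn ω)
  | 0, ω => by
    rw [Wpos, expReward_senseSet, myopicValue, stepValue]
    exact bernoulliExpect.congr fun e _ => by rw [mul_zero, add_zero]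
  | s + 1, ω => by
    have hsum := sum_powerset_senseSet (k := k) ω
      fun e => Wpos p01 p11 β N k m s (nextPos p01 p11 k ω e)
    rw [Wpos, expReward_senseSet, hsum, ← bernoulliExpect.const_mul, ← bernoulliExpect.add,
      myopicValue, stepValue]
    refine bernoulliExpect.congr fun e he => ?_
    rw [Wpos_eq_myopicValue hk s, ofFn_nextPos (by simp at he; omega) hk]

theorem ofFn_cycR {n : ℕ} (ω : Fin (n + 1) → ℝ) :
    List.ofFn (cycR ω) = ω (Fin.last n) :: List.ofFn fun i : Fin n => ω i.castSucc := by
  simp [List.ofFn_succ, cycR, Fin.last]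
  rfl

end Wpos

theorem Wpos_L1_general (p01 p11 β : ℝ) (h0 : p01 ∈ Set.Icc (0 : ℝ) 1)
    (h1 : p11 ∈ Set.Icc (0 : ℝ) 1) (hp : p01 ≤ p11)
    (N k m T : ℕ) (hkN : k ≤ N)
    (hβ0 : 0 ≤ β) (hβ1 : β ≤ 1)
    (hcond : β * Rbar p01 p11 m (k - 1) ≤ Rlow p01 p11 m (k - 1)) :
    ∀ t, 1 ≤ t → t ≤ T → ∀ ω : Fin N → ℝ,
      (∀ i, ω i ∈ Set.Icc p01 p11) → Antitone ω →
      Rbar p01 p11 m (k - 1) + Wpos p01 p11 β N k m (T - t) (cycR ω) ≥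
        Wpos p01 p11 β N k m (T - t) ω := by
  intro t _ _ ω hω hanti
  have hR := Rbar_nonneg (m := m) h0.1 hp h1.2 (k - 1)
  cases N with
  | zero => simpa [Subsingleton.elim (cycR ω) ω] using hR
  | succ n =>
    rw [ge_iff_le, Wpos_eq_myopicValue hkN, Wpos_eq_myopicValue hkN, ofFn_cycR, List.ofFn_succ',
      List.concat_eq_append, add_comm]
    simpa using (orderRegular_myopicValue h0.1 hp h1.2 hβ0 hβ1 hcond (T - t)).move []
      (List.ofFn fun i : Fin n => ω i.castSucc) [] (ω (Fin.last n))
      (fun z hz => by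
        simp only [List.nil_append, List.mem_append, List.mem_ofFn, List.mem_singleton] at hz
        rcases hz with ⟨i, rfl⟩ | rfl <;> exact hω _)
      (by simpa [List.mem_ofFn] using fun i : Fin n => hanti (Fin.le_last i.castSucc))

/-- key inequality L1 for positively correlated channels:
`ℛ̄ + W_t(ω_N, ω_1, …, ω_{N-1}) ≥ W_t(ω_1, …, ω_N)`. -/
theorem Wpos_L1 (p01 p11 β : ℝ) (h0 : p01 ∈ Set.Icc (0 : ℝ) 1)
    (h1 : p11 ∈ Set.Icc (0 : ℝ) 1) (hp : p01 ≤ p11)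
    (N k m T : ℕ) (hm : 1 ≤ m) (hmk : m ≤ k) (hkN : k ≤ N) (hT : 1 ≤ T)
    (hβ0 : 0 ≤ β) (hβ1 : β ≤ 1)
    (hcond : β * Rbar p01 p11 m (k - 1) ≤ Rlow p01 p11 m (k - 1)) :
    ∀ t, 1 ≤ t → t ≤ T → ∀ ω : Fin N → ℝ,
      (∀ i, ω i ∈ Set.Icc p01 p11) → Antitone ω →
      Rbar p01 p11 m (k - 1) + Wpos p01 p11 β N k m (T - t) (cycR ω) ≥
        Wpos p01 p11 β N k m (T - t) ω :=
  Wpos_L1_general p01 p11 β h0 h1 hp N k m T hkN hβ0 hβ1 hcond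
end
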